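/- arXiv:2501.08664 — 3 statements merged into one kernel-verified Lean document; each statement's English description precedes it below -/
import Mathlib

section
/- Let Π be a finite multiset of rankings over C with |C| = n, and let π₀ be the ranking represented by the acyclic matrix X₀. Then π₀ is a Kemeny ranking for Π (a minimizer over all rankings of the cumulative Kendall tau distance to Π) if and only if X₀ minimizes the cost function C(X) = ∑_{i<j} b_{ij} x_{ij} over all acyclic strictly upper triangular binary matrices X, where b_{ij} = w_{ji} - w_{ij} and w_{ij} is the number of rankings in Π preferring c_i to c_j. -/
/-!
Exchanging the two summations, the cumulative Kendall tau distance from a ranking `τ` to `Π`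
counts, for each pair `i < j`, the rankings of `Π` that disagree with `τ` on that pair: there are
`w_{ji}` of them if `τ` puts `c_i` first and `w_{ij}` otherwise, that is `w_{ij} + b_{ij} x_{ij}`
where `X` is the matrix of `τ`. Hence `∑_{π ∈ Π} KT(π, τ) = ∑_{i<j} w_{ij} + C(X)`, and
minimizing either side is the same problem because every acyclic matrix is the matrix of some
ranking: it defines a strict total order, and ranking each element by its number of predecessors
realizes that order by a permutation.
-/

def KTdist (n : ℕ) (σ τ : Equiv.Perm (Fin n)) : ℕ :=
  (Finset.univ.filter (fun p : Fin n × Fin n =>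
    p.1 < p.2 ∧ ¬((σ p.1 < σ p.2) ↔ (τ p.1 < τ p.2)))).card

def wMat (n : ℕ) (Ps : Multiset (Equiv.Perm (Fin n))) (i j : Fin n) : ℕ :=
  (Ps.filter (fun σ => σ i < σ j)).card

def biasMat (n : ℕ) (Ps : Multiset (Equiv.Perm (Fin n))) (i j : Fin n) : ℤ :=
  (wMat n Ps j i : ℤ) - (wMat n Ps i j : ℤ)

/-- The linear cost `C(X) = ∑_{i<j} b_{ij} x_{ij}`. -/
def linCost (n : ℕ) (Ps : Multiset (Equiv.Perm (Fin n))) (X : Fin n → Fin n → Bool) : ℤ :=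
  ∑ p ∈ Finset.univ.filter (fun p : Fin n × Fin n => p.1 < p.2),
    biasMat n Ps p.1 p.2 * (if X p.1 p.2 = true then 1 else 0)

/-- Strictly upper triangular and acyclic (no cyclic inconsistency in either direction). -/
def AcyclicSUT (n : ℕ) (X : Fin n → Fin n → Bool) : Prop :=
  (∀ i j : Fin n, ¬ i < j → X i j = false) ∧
  (∀ i j k : Fin n, i < j → j < k →
    ¬((X i j = true ∧ X j k = true ∧ X i k = false) ∨
      (X i j = false ∧ X j k = false ∧ X i k = true)))

open Finset

theorem Multiset.sum_map_card_filter {α β : Type*} (m : Multiset α) (s : Finset β)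
    (r : α → β → Prop) [∀ a b, Decidable (r a b)] :
    (m.map fun a => #{b ∈ s | r a b}).sum = ∑ b ∈ s, (m.filter (r · b)).card := by
  induction m using Multiset.induction with
  | empty => simp
  | cons a m ih =>
    rw [Multiset.map_cons, Multiset.sum_cons, ih, card_filter, ← sum_add_distrib]
    refine sum_congr rfl fun b _ => ?_
    rw [Multiset.filter_cons]
    split_ifs <;> simp [add_comm]

namespace Kemeny

variable {n : ℕ}

theorem exists_perm_lt_iff (r : Fin n → Fin n → Prop) [DecidableRel r]
    (irrefl : ∀ i, ¬ r i i) (trans : ∀ {i j k}, r i j → r j k → r i k)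
    (total : ∀ {i j}, i ≠ j → r i j ∨ r j i) :
    ∃ τ : Equiv.Perm (Fin n), ∀ i j, r i j ↔ τ i < τ j := by
  let rank : Fin n → ℕ := fun i => #{k | r k i}
  have rank_lt : ∀ i, rank i < n := fun i => by
    simpa using card_lt_card ((filter_ssubset (p := (r · i))).mpr ⟨i, mem_univ i, irrefl i⟩)
  have rank_lt_of_rel : ∀ {i j}, r i j → rank i < rank j := fun hij =>
    card_lt_card ⟨monotone_filter_right _ fun _ _ hk => trans hk hij,
      fun hsub => irrefl _ (mem_filter.mp (hsub (mem_filter.mpr ⟨mem_univ _, hij⟩))).2⟩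
  let f : Fin n → Fin n := fun i => ⟨rank i, rank_lt i⟩
  have rel_iff : ∀ i j, r i j ↔ f i < f j := fun i j => by
    refine ⟨rank_lt_of_rel, fun hlt => ?_⟩
    have hne : i ≠ j := by rintro rfl; exact lt_irrefl _ hlt
    exact (total hne).resolve_right fun hji => (rank_lt_of_rel hji).not_gt hlt
  have hinj : Function.Injective f := fun i j hij => by
    by_contra hne
    rcases total hne with h | h <;> simp [rel_iff, hij] at h
  exact ⟨Equiv.ofBijective f hinj.bijective_of_finite, rel_iff⟩

/-- `c_i` comes before `c_j` in the ranking represented by `X`. -/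
def precOf (X : Fin n → Fin n → Bool) (i j : Fin n) : Prop :=
  (i < j ∧ X i j = true) ∨ (j < i ∧ X j i = false)

theorem precOf_irrefl (X : Fin n → Fin n → Bool) (i : Fin n) : ¬ precOf X i i := by
  rintro (⟨h, -⟩ | ⟨h, -⟩) <;> exact lt_irrefl i h

theorem precOf_total (X : Fin n → Fin n → Bool) {i j : Fin n} (hij : i ≠ j) :
    precOf X i j ∨ precOf X j i := by
  unfold precOf
  rcases hij.lt_or_gt with h | h <;> cases X i j <;> cases X j i <;> simp [h]

theorem precOf_trans {X : Fin n → Fin n → Bool} (hX : AcyclicSUT n X) {i j k : Fin n}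
    (hij : precOf X i j) (hjk : precOf X j k) : precOf X i k := by
  have := hX.2
  unfold precOf at *
  grind

theorem exists_perm_of_acyclicSUT {X : Fin n → Fin n → Bool} (hX : AcyclicSUT n X) :
    ∃ τ : Equiv.Perm (Fin n), ∀ i j, i < j → (X i j = true ↔ τ i < τ j) := by
  classical
  obtain ⟨τ, hτ⟩ :=
    exists_perm_lt_iff (precOf X) (precOf_irrefl X) (precOf_trans hX) (precOf_total X)
  refine ⟨τ, fun i j hij => ?_⟩
  rw [← hτ]
  simp [precOf, hij, hij.not_gt]

def rankMatrix (τ : Equiv.Perm (Fin n)) (i j : Fin n) : Bool :=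
  decide (i < j ∧ τ i < τ j)

theorem rankMatrix_eq_true_iff (τ : Equiv.Perm (Fin n)) {i j : Fin n} (hij : i < j) :
    rankMatrix τ i j = true ↔ τ i < τ j := by
  simp [rankMatrix, hij]

theorem acyclicSUT_rankMatrix (τ : Equiv.Perm (Fin n)) : AcyclicSUT n (rankMatrix τ) := by
  refine ⟨fun i j hij => by simp [rankMatrix, hij], fun i j k hij hjk => ?_⟩
  have := τ.injective.ne hij.ne
  have := τ.injective.ne hjk.ne
  simp only [rankMatrix, hij, hjk, hij.trans hjk, true_and, decide_eq_true_eq,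
    decide_eq_false_iff_not]
  grind

theorem card_filter_disagree (Ps : Multiset (Equiv.Perm (Fin n))) (τ : Equiv.Perm (Fin n))
    {i j : Fin n} (hij : i ≠ j) :
    (Ps.filter fun ρ => ¬((ρ i < ρ j) ↔ (τ i < τ j))).card =
      if τ i < τ j then wMat n Ps j i else wMat n Ps i j := by
  have hρ : ∀ ρ : Equiv.Perm (Fin n), ¬ ρ i < ρ j ↔ ρ j < ρ i := fun ρ =>
    ⟨fun h => (not_lt.mp h).lt_of_ne (ρ.injective.ne hij.symm), fun h => h.not_gt⟩
  split_ifs with hτ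
  · simp only [wMat, hτ, iff_true, hρ]
  · simp only [wMat, hτ, iff_false, not_not]

theorem sum_KTdist_eq (Ps : Multiset (Equiv.Perm (Fin n))) (τ : Equiv.Perm (Fin n))
    (X : Fin n → Fin n → Bool) (hrep : ∀ i j : Fin n, i < j → (X i j = true ↔ τ i < τ j)) :
    ((Ps.map fun ρ => KTdist n ρ τ).sum : ℤ) =
      ∑ p : Fin n × Fin n with p.1 < p.2, (wMat n Ps p.1 p.2 : ℤ) + linCost n Ps X := by
  simp only [KTdist, ← filter_filter, Multiset.sum_map_card_filter, linCost]
  push_cast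
  rw [← sum_add_distrib]
  refine sum_congr rfl fun p hp => ?_
  have hlt : p.1 < p.2 := (mem_filter.mp hp).2
  rw [card_filter_disagree Ps τ hlt.ne]
  simp only [← hrep _ _ hlt]
  cases X p.1 p.2 <;> simp [biasMat]

end Kemeny

theorem stmt_3_general (n : ℕ) (Ps : Multiset (Equiv.Perm (Fin n))) (σ₀ : Equiv.Perm (Fin n))
    (X₀ : Fin n → Fin n → Bool)
    (hrep : ∀ i j : Fin n, i < j → (X₀ i j = true ↔ σ₀ i < σ₀ j)) :
    (∀ τ : Equiv.Perm (Fin n),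
        (Ps.map fun ρ => KTdist n ρ σ₀).sum ≤ (Ps.map fun ρ => KTdist n ρ τ).sum) ↔
    (∀ X : Fin n → Fin n → Bool, AcyclicSUT n X → linCost n Ps X₀ ≤ linCost n Ps X) := by
  have hσ₀ := Kemeny.sum_KTdist_eq Ps σ₀ X₀ hrep
  constructor
  · intro hkemeny X hX
    obtain ⟨τ, hτ⟩ := Kemeny.exists_perm_of_acyclicSUT hX
    have hle : ((Ps.map fun ρ => KTdist n ρ σ₀).sum : ℤ) ≤ (Ps.map fun ρ => KTdist n ρ τ).sum :=
      mod_cast hkemeny τ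
    linarith [Kemeny.sum_KTdist_eq Ps τ X hτ]
  · intro hmin τ
    have hle := hmin _ (Kemeny.acyclicSUT_rankMatrix τ)
    suffices ((Ps.map fun ρ => KTdist n ρ σ₀).sum : ℤ) ≤ (Ps.map fun ρ => KTdist n ρ τ).sum from
      mod_cast this
    linarith [Kemeny.sum_KTdist_eq Ps τ _ fun i j => Kemeny.rankMatrix_eq_true_iff τ]

/-- `σ₀`, represented by the acyclic matrix `X₀`, is a Kemeny ranking for the
multiset `Ps` iff `X₀` minimizes `C(X) = ∑_{i<j} b_{ij} x_{ij}` over all acyclic strictly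
upper triangular binary matrices. -/
theorem stmt_3 (n : ℕ) (Ps : Multiset (Equiv.Perm (Fin n))) (σ₀ : Equiv.Perm (Fin n))
    (X₀ : Fin n → Fin n → Bool) (hacyc : AcyclicSUT n X₀)
    (hrep : ∀ i j : Fin n, i < j → (X₀ i j = true ↔ σ₀ i < σ₀ j)) :
    (∀ τ : Equiv.Perm (Fin n),
        (Ps.map fun ρ => KTdist n ρ σ₀).sum ≤ (Ps.map fun ρ => KTdist n ρ τ).sum) ↔
    (∀ X : Fin n → Fin n → Bool, AcyclicSUT n X → linCost n Ps X₀ ≤ linCost n Ps X) :=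
  stmt_3_general n Ps σ₀ X₀ hrep
end

section
/- Let X be a strictly upper triangular n×n binary matrix. The penalty sum ∑_{i<j<k} (x_{ik} + x_{ij}x_{jk} - x_{ij}x_{ik} - x_{jk}x_{ik}) is always nonnegative, and it vanishes if and only if X is acyclic (i.e., X represents a ranking over a set of n candidates). -/
/-- 0/1 integer value of a Bool matrix entry. -/
def bval (b : Bool) : ℤ := if b then 1 else 0

/-- Total penalty sum over all triples i < j < k. -/
def penaltySum (n : ℕ) (X : Fin n → Fin n → Bool) : ℤ :=
  ∑ t ∈ Finset.univ.filter (fun t : Fin n × Fin n × Fin n => t.1 < t.2.1 ∧ t.2.1 < t.2.2),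
    (bval (X t.1 t.2.2) + bval (X t.1 t.2.1) * bval (X t.2.1 t.2.2)
      - bval (X t.1 t.2.1) * bval (X t.1 t.2.2)
      - bval (X t.2.1 t.2.2) * bval (X t.1 t.2.2))

lemma penalty_term_nonneg (a b c : Bool) :
    0 ≤ bval c + bval a * bval b - bval a * bval c - bval b * bval c := by
  cases a <;> cases b <;> cases c <;> decide

lemma penalty_term_eq_zero_iff (a b c : Bool) :
    bval c + bval a * bval b - bval a * bval c - bval b * bval c = 0 ↔
      ¬((a = true ∧ b = true ∧ c = false) ∨ (a = false ∧ b = false ∧ c = true)) := by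
  cases a <;> cases b <;> cases c <;> decide

theorem stmt_5_general (n : ℕ) (X : Fin n → Fin n → Bool) :
    0 ≤ penaltySum n X ∧
    (penaltySum n X = 0 ↔
      ∀ i j k : Fin n, i < j → j < k →
        ¬((X i j = true ∧ X j k = true ∧ X i k = false) ∨
          (X i j = false ∧ X j k = false ∧ X i k = true))) := by
  rw [penaltySum]
  refine ⟨Finset.sum_nonneg fun _ _ => penalty_term_nonneg _ _ _, ?_⟩
  rw [Finset.sum_eq_zero_iff_of_nonneg fun _ _ => penalty_term_nonneg _ _ _]
  simp only [Finset.mem_filter, Finset.mem_univ, true_and, penalty_term_eq_zero_iff,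
    Prod.forall, and_imp]

/-- the penalty sum of a strictly upper triangular binary matrix is
nonnegative, and vanishes iff the matrix is acyclic (no triple i < j < k in a
configuration (1,1,0) or (0,0,1)). -/
theorem stmt_5 (n : ℕ) (X : Fin n → Fin n → Bool)
    (hsut : ∀ i j : Fin n, ¬ i < j → X i j = false) :
    0 ≤ penaltySum n X ∧
    (penaltySum n X = 0 ↔
      ∀ i j k : Fin n, i < j → j < k →
        ¬((X i j = true ∧ X j k = true ∧ X i k = false) ∨
          (X i j = false ∧ X j k = false ∧ X i k = true))) :=
  stmt_5_general n X
end

section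
/- If the bias matrix of a multiset Π of rankings admits no majority cycles—that is, the tournament defined by i → j whenever b_{ij} < 0 (c_i majority-preferred to c_j) is transitive and b_{ij} ≠ 0 for all i ≠ j—then the ranking π defined by this majority relation is the unique Kemeny ranking for Π. -/
/-!
The summed Kendall tau distance from the profile to a ranking `τ` splits over the pairs `i < j`:
a pair costs `w_{ji}` if `τ` puts `i` first and `w_{ij}` otherwise, so never less than
`min w_{ij} w_{ji}`. The majority relation is a strict total order on the candidates, hence is
the order of some ranking `σ`, and `σ` pays exactly this minimum on every pair. Any `τ ≠ σ`
disagrees with `σ` on some pair, and as there are no ties it pays strictly more there.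
-/

theorem Multiset.sum_map_boole {α : Type*} (s : Multiset α) (p : α → Prop) [DecidablePred p] :
    (s.map fun a => if p a then 1 else 0).sum = (s.filter p).card := by
  induction s using Multiset.induction with
  | empty => simp
  | cons a s ih => by_cases h : p a <;> simp [h, ih, add_comm]

theorem exists_equiv_fin_lt_iff {α : Type*} [Fintype α] (r : α → α → Prop)
    [IsStrictTotalOrder α r] {n : ℕ} (h : Fintype.card α = n) :
    ∃ e : α ≃ Fin n, ∀ i j, e i < e j ↔ r i j := by
  classical
  let _ : LinearOrder α := linearOrderOfSTO r
  exact ⟨(Fintype.orderIsoFinOfCardEq α h).symm.toEquiv, fun i j =>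
    (Fintype.orderIsoFinOfCardEq α h).symm.lt_iff_lt (x := i) (y := j)⟩

theorem Equiv.eq_of_forall_lt_iff {α β : Type*} [LinearOrder β] [Finite β] {σ τ : α ≃ β}
    (h : ∀ i j, τ i < τ j ↔ σ i < σ j) : τ = σ := by
  have hmono : StrictMono (σ.symm.trans τ) := fun a b hab => by
    simpa [h] using hab
  ext i
  simpa using congrFun hmono.eq_id (σ i)

theorem Equiv.exists_lt_not_lt_iff_of_ne {α β : Type*} [LinearOrder α] [LinearOrder β] [Finite β]
    {σ τ : α ≃ β} (hne : τ ≠ σ) : ∃ i j, i < j ∧ ¬(τ i < τ j ↔ σ i < σ j) := by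
  by_contra! hagree
  refine hne (Equiv.eq_of_forall_lt_iff fun i j => ?_)
  have lt_iff_not_gt {f : α ≃ β} (hji : j < i) : f i < f j ↔ ¬f j < f i := by
    rw [not_lt, (f.injective.ne hji.ne').le_iff_lt]
  rcases lt_trichotomy i j with hij | rfl | hji
  · exact hagree i j hij
  · simp
  · rw [lt_iff_not_gt hji, lt_iff_not_gt hji, hagree j i hji]

section

variable {n : ℕ}

def pairCost (Ps : Multiset (Equiv.Perm (Fin n))) (τ : Equiv.Perm (Fin n)) (i j : Fin n) : ℕ :=
  if τ i < τ j then wMat n Ps j i else wMat n Ps i j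

theorem card_filter_disagree_eq_pairCost (Ps : Multiset (Equiv.Perm (Fin n)))
    (τ : Equiv.Perm (Fin n)) {i j : Fin n} (hij : i ≠ j) :
    (Ps.filter fun ρ => ¬(ρ i < ρ j ↔ τ i < τ j)).card = pairCost Ps τ i j := by
  unfold pairCost wMat
  split_ifs with h
  · congr 1
    refine Multiset.filter_congr fun ρ _ => ?_
    rw [iff_true_right h, not_lt, (ρ.injective.ne hij.symm).le_iff_lt]
  · simp [h]

theorem sum_KTdist_eq_sum_pairCost (Ps : Multiset (Equiv.Perm (Fin n))) (τ : Equiv.Perm (Fin n)) :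
    (Ps.map fun ρ => KTdist n ρ τ).sum =
      ∑ p ∈ Finset.univ.filter (fun p : Fin n × Fin n => p.1 < p.2), pairCost Ps τ p.1 p.2 := by
  simp only [KTdist, ← Finset.filter_filter, Finset.card_filter]
  rw [Multiset.sum_map_sum]
  refine Finset.sum_congr rfl fun p hp => ?_
  rw [Multiset.sum_map_boole, card_filter_disagree_eq_pairCost]
  exact (Finset.mem_filter.mp hp).2.ne

theorem min_le_pairCost (Ps : Multiset (Equiv.Perm (Fin n))) (τ : Equiv.Perm (Fin n))
    (i j : Fin n) : min (wMat n Ps i j) (wMat n Ps j i) ≤ pairCost Ps τ i j := by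
  unfold pairCost; split_ifs <;> omega

theorem pairCost_eq_min_iff (Ps : Multiset (Equiv.Perm (Fin n))) (τ : Equiv.Perm (Fin n))
    {i j : Fin n} (hne : wMat n Ps i j ≠ wMat n Ps j i) :
    pairCost Ps τ i j = min (wMat n Ps i j) (wMat n Ps j i) ↔
      (τ i < τ j ↔ wMat n Ps j i < wMat n Ps i j) := by
  unfold pairCost; split_ifs <;> omega

end

/-- if all majority preferences are strict (`w_{ij} ≠ w_{ji}` for i ≠ j) and
the strict majority tournament is transitive, then the ranking defined by the majority
relation exists and is the unique Kemeny ranking for `Ps`. -/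
theorem stmt_13 (n : ℕ) (Ps : Multiset (Equiv.Perm (Fin n)))
    (hne : ∀ i j : Fin n, i ≠ j → wMat n Ps i j ≠ wMat n Ps j i)
    (htrans : ∀ i j k : Fin n,
      wMat n Ps i j > wMat n Ps j i → wMat n Ps j k > wMat n Ps k j →
        wMat n Ps i k > wMat n Ps k i) :
    ∃ σ : Equiv.Perm (Fin n),
      (∀ i j : Fin n, i ≠ j → (σ i < σ j ↔ wMat n Ps i j > wMat n Ps j i)) ∧
      (∀ τ : Equiv.Perm (Fin n), τ ≠ σ →
        (Ps.map fun ρ => KTdist n ρ σ).sum < (Ps.map fun ρ => KTdist n ρ τ).sum) := by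
  have : IsStrictTotalOrder (Fin n) fun i j => wMat n Ps i j > wMat n Ps j i :=
    { trichotomous := fun i j h₁ h₂ => by_contra fun hij => hne i j hij (by omega)
      irrefl := fun i => lt_irrefl _
      trans := htrans }
  obtain ⟨σ, hσ⟩ :=
    exists_equiv_fin_lt_iff (fun i j => wMat n Ps i j > wMat n Ps j i) (Fintype.card_fin n)
  have hσ_min {i j : Fin n} (hij : i ≠ j) :
      pairCost Ps σ i j = min (wMat n Ps i j) (wMat n Ps j i) :=
    (pairCost_eq_min_iff Ps σ (hne i j hij)).mpr (hσ i j)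
  refine ⟨σ, fun i j _ => hσ i j, fun τ hτ => ?_⟩
  obtain ⟨i, j, hij, hdisagree⟩ := Equiv.exists_lt_not_lt_iff_of_ne hτ
  rw [sum_KTdist_eq_sum_pairCost, sum_KTdist_eq_sum_pairCost]
  refine Finset.sum_lt_sum (fun p hp => ?_) ⟨(i, j), by simpa using hij, ?_⟩
  · rw [hσ_min (Finset.mem_filter.mp hp).2.ne]
    exact min_le_pairCost Ps τ p.1 p.2
  · rw [hσ_min hij.ne]
    refine (min_le_pairCost Ps τ i j).lt_of_ne fun h => hdisagree ?_
    rw [(pairCost_eq_min_iff Ps τ (hne i j hij.ne)).mp h.symm, hσ i j]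
end
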